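/- Let F_oct = x1x2x3 + x1x3x4 + x1x4x5 + x1x2x5 + x2x3x6 + x3x4x6 + x4x5x6 + x2x5x6 ∈ ℝ[x_1,…,x_6]. Then Ann(F_oct) is the ideal of ℝ[∂_1,…,∂_6] generated by ∂_1−∂_6, ∂_2−∂_4, ∂_3−∂_5, ∂_1², ∂_2², ∂_3². -/

import Mathlib

/-!
With `y₁ = x₁ + x₆`, `y₂ = x₂ + x₄`, `y₃ = x₃ + x₅` the sums over the three axes of the
octahedron, the facet polynomial factors as `F_oct = y₁ y₂ y₃`. On such products `∂ᵢ` acts as the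
derivative with respect to the `y` of the axis through vertex `i`, so `∂₁ - ∂₆`, `∂₂ - ∂₄`,
`∂₃ - ∂₅` and `∂₁², ∂₂², ∂₃²` kill `F_oct`. Modulo these generators every operator is a
combination of the eight squarefree monomials `∂^S = ∏_{k ∈ S} ∂ₖ`, `S ⊆ {1, 2, 3}`, and
`∂^(Sᶜ) ∂^T F_oct` has constant term `δ_{ST}`: this perfect pairing shows that no nonzero such
combination annihilates `F_oct`.
-/

open MvPolynomial

noncomputable section

lemma pderiv_commute {n : ℕ} (i j : Fin n) (f : MvPolynomial (Fin n) ℝ) :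
    pderiv i (pderiv j f) = pderiv j (pderiv i f) := by
  rcases eq_or_ne i j with rfl | hij
  · rfl
  · induction f using MvPolynomial.induction_on' with
    | monomial m a =>
        simp only [pderiv_monomial]
        have h1 : (m - Finsupp.single j 1 : Fin n →₀ ℕ) i = m i := by
          rw [Finsupp.tsub_apply, Finsupp.single_eq_of_ne' hij.symm, tsub_zero]
        have h2 : (m - Finsupp.single i 1 : Fin n →₀ ℕ) j = m j := by
          rw [Finsupp.tsub_apply, Finsupp.single_eq_of_ne' hij, tsub_zero]
        rw [h1, h2, tsub_right_comm]
        congr 1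
        ring
    | add p q hp hq => simp [hp, hq]

/-- The set of the partial derivative operators `∂ᵢ` on `ℝ[x₁, …, xₙ]`. -/
def pdSet (n : ℕ) : Set (Module.End ℝ (MvPolynomial (Fin n) ℝ)) :=
  Set.range fun i : Fin n =>
    ((pderiv i : Derivation ℝ (MvPolynomial (Fin n) ℝ) (MvPolynomial (Fin n) ℝ)) :
      MvPolynomial (Fin n) ℝ →ₗ[ℝ] MvPolynomial (Fin n) ℝ)

instance pdCommRing (n : ℕ) : CommRing (Algebra.adjoin ℝ (pdSet n)) :=
  Algebra.adjoinCommRingOfComm ℝ (by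
    rintro _ ⟨i, rfl⟩ _ ⟨j, rfl⟩
    apply LinearMap.ext
    intro f
    exact pderiv_commute i j f)

/-- The algebra map sending a polynomial `f` (in the "∂ variables") to the differential
operator `f(∂₁, …, ∂ₙ)` acting on `ℝ[x₁, …, xₙ]`; thus `dop n f F` is the result of
applying the differential operator `f(∂₁, …, ∂ₙ)` to the polynomial `F`. -/
def dop (n : ℕ) : MvPolynomial (Fin n) ℝ →ₐ[ℝ] Module.End ℝ (MvPolynomial (Fin n) ℝ) :=
  (Algebra.adjoin ℝ (pdSet n)).val.comp
    (aeval fun i : Fin n =>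
      (⟨_, Algebra.subset_adjoin (Set.mem_range_self i)⟩ : Algebra.adjoin ℝ (pdSet n)))

/-- `Ann F`, the annihilator of `F`: the ideal of all differential-operator polynomials `f`
with `f(∂₁, …, ∂ₙ) F = 0`. -/
def annIdeal {n : ℕ} (F : MvPolynomial (Fin n) ℝ) : Ideal (MvPolynomial (Fin n) ℝ) where
  carrier := {f | dop n f F = 0}
  add_mem' := by
    intro a b ha hb
    simp only [Set.mem_setOf_eq] at *
    rw [map_add, LinearMap.add_apply, ha, hb, add_zero]
  zero_mem' := by
    simp only [Set.mem_setOf_eq, map_zero, LinearMap.zero_apply]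
  smul_mem' := by
    intro c f hf
    simp only [Set.mem_setOf_eq] at *
    rw [smul_eq_mul, map_mul, Module.End.mul_apply, hf, map_zero]

/-- The Artinian Gorenstein algebra `A_F = ℝ[∂₁, …, ∂ₙ]/Ann(F)`. -/
abbrev AF {n : ℕ} (F : MvPolynomial (Fin n) ℝ) := MvPolynomial (Fin n) ℝ ⧸ annIdeal F

/-- The degree-`k` homogeneous component `(A_F)_k` of `A_F`, as a submodule of `A_F`:
the image of the space of homogeneous polynomials of degree `k` under the quotient map. -/
def gradeA {n : ℕ} (F : MvPolynomial (Fin n) ℝ) (k : ℕ) : Submodule ℝ (AF F) :=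
  Submodule.map (Ideal.Quotient.mkₐ ℝ (annIdeal F)).toLinearMap
    (homogeneousSubmodule (Fin n) ℝ k)

/-- `ℓ ∈ A_F` is a strong Lefschetz element of `A_F` (with socle degree `s`) if the
multiplication map `×ℓ^(s-2k) : (A_F)_k → (A_F)_(s-k)` is bijective for every `k` with
`0 ≤ k ≤ s/2`. -/
def IsSLelem {n : ℕ} (F : MvPolynomial (Fin n) ℝ) (s : ℕ) (ℓ : AF F) : Prop :=
  ∀ k : ℕ, 2 * k ≤ s →
    Set.BijOn (fun f => ℓ ^ (s - 2 * k) * f) (gradeA F k) (gradeA F (s - k))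

/-- `A_F` (with socle degree `s`) has the strong Lefschetz property. -/
def HasSLP {n : ℕ} (F : MvPolynomial (Fin n) ℝ) (s : ℕ) : Prop :=
  ∃ ℓ ∈ gradeA F 1, IsSLelem F s ℓ

/-- `A_F` (with socle degree `s`) satisfies the Hodge–Riemann relation with respect to the
class `ℓ` of a linear form `L`: for every `k` with `0 ≤ k ≤ s/2`, the bilinear form
`Q^k_ℓ(f, g) = (-1)^k P^k(f, ℓ^(s-2k) g)` (where `P^k(f, g) = f g F` is the Poincaré duality
pairing) is positive definite on the kernel of `×ℓ^(s-2k+1) : (A_F)_k → (A_F)_(s-k+1)`,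
i.e. `Q^k_ℓ(f, f) > 0` for every nonzero `f ∈ (A_F)_k` in that kernel. -/
def SatisfiesHRR {n : ℕ} (F : MvPolynomial (Fin n) ℝ) (s : ℕ) (L : MvPolynomial (Fin n) ℝ) :
    Prop :=
  ∀ k : ℕ, 2 * k ≤ s →
    ∀ f ∈ homogeneousSubmodule (Fin n) ℝ k,
      dop n (L ^ (s - 2 * k + 1) * f) F = 0 →
      Ideal.Quotient.mk (annIdeal F) f ≠ 0 →
      0 < (-1 : ℝ) ^ k * constantCoeff (dop n (L ^ (s - 2 * k) * f * f) F)

/-- The facet polynomial of the regular octahedron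
(vertices `0,…,5` standing for `1,…,6`). -/
def Foct : MvPolynomial (Fin 6) ℝ :=
  X 0 * X 1 * X 2 + X 0 * X 2 * X 3 + X 0 * X 3 * X 4 + X 0 * X 1 * X 4 +
    X 1 * X 2 * X 5 + X 2 * X 3 * X 5 + X 3 * X 4 * X 5 + X 1 * X 4 * X 5

namespace MvPolynomial

section Derivatives

variable {σ ι R : Type*} [CommSemiring R] [DecidableEq ι]

theorem pderiv_prod_eq_ite (i : σ) {y : ι → MvPolynomial σ R} {k : ι}
    (hy : ∀ l, pderiv i (y l) = if l = k then 1 else 0) (T : Finset ι) :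
    pderiv i (∏ l ∈ T, y l) = if k ∈ T then ∏ l ∈ T.erase k, y l else 0 := by
  induction T using Finset.induction_on with
  | empty => simp
  | insert a T ha ih =>
    rw [Finset.prod_insert ha, Derivation.leibniz, ih, hy, smul_eq_mul, smul_eq_mul]
    rcases eq_or_ne a k with rfl | hak
    · simp [ha, Finset.erase_insert ha]
    · rw [Finset.erase_insert_of_ne hak,
        Finset.prod_insert fun h => ha (Finset.mem_of_mem_erase h)]
      by_cases hk : k ∈ T <;> simp [hk, hak, hak.symm]

variable [Fintype σ]

def fiberSum (τ : σ → ι) (k : ι) : MvPolynomial σ R :=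
  ∑ i with τ i = k, X i

theorem pderiv_fiberSum [DecidableEq σ] (τ : σ → ι) (i : σ) (k : ι) :
    pderiv i (fiberSum (R := R) τ k) = if k = τ i then 1 else 0 := by
  simp only [fiberSum, map_sum, pderiv_X, Finset.sum_pi_single', Finset.mem_filter,
    Finset.mem_univ, true_and, eq_comm]

theorem pderiv_prod_fiberSum [DecidableEq σ] (τ : σ → ι) (i : σ) (T : Finset ι) :
    pderiv i (∏ l ∈ T, fiberSum (R := R) τ l) =
      if τ i ∈ T then ∏ l ∈ T.erase (τ i), fiberSum τ l else 0 :=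
  pderiv_prod_eq_ite i (fun l => pderiv_fiberSum τ i l) T

theorem constantCoeff_prod_fiberSum (τ : σ → ι) (T : Finset ι) :
    constantCoeff (∏ l ∈ T, fiberSum (R := R) τ l) = if T = ∅ then 1 else 0 := by
  have h (l : ι) : constantCoeff (fiberSum (R := R) τ l) = 0 := by simp [fiberSum]
  split_ifs with hT
  · simp [hT]
  · obtain ⟨l, hl⟩ := Finset.nonempty_iff_ne_empty.2 hT
    rw [map_prod]
    exact Finset.prod_eq_zero hl (h l)

end Derivatives

section Reduction

variable {σ ι R : Type*} [CommRing R] {I : Ideal (MvPolynomial σ R)} {e : ι → σ}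
  {τ : σ → ι}

theorem mem_span_prod_X_sup (hτ : ∀ i, X i - X (e (τ i)) ∈ I) (hsq : ∀ k, X (e k) ^ 2 ∈ I)
    (f : MvPolynomial σ R) :
    f ∈ Submodule.span R (Set.range fun S : Finset ι => ∏ k ∈ S, X (e k)) ⊔
      I.restrictScalars R := by
  classical
  set B := Submodule.span R
    (Set.range fun S : Finset ι => ∏ k ∈ S, (X (e k) : MvPolynomial σ R))
  have prod_mul_X (S : Finset ι) (k : ι) :
      (∏ k' ∈ S, X (e k')) * X (e k) ∈ B ⊔ I.restrictScalars R := by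
    by_cases hk : k ∈ S
    · refine Submodule.mem_sup_right ?_
      rw [← Finset.mul_prod_erase S _ hk, mul_right_comm, ← pow_two]
      exact I.mul_mem_right _ (hsq k)
    · refine Submodule.mem_sup_left (Submodule.subset_span ⟨insert k S, ?_⟩)
      dsimp only
      rw [Finset.prod_insert hk, mul_comm]
  have span_mul_X (b : MvPolynomial σ R) (hb : b ∈ B) (k : ι) :
      b * X (e k) ∈ B ⊔ I.restrictScalars R := by
    induction hb using Submodule.span_induction with
    | mem _ h => obtain ⟨S, rfl⟩ := h; exact prod_mul_X S k
    | zero => simp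
    | add _ _ _ _ h₁ h₂ => rw [add_mul]; exact add_mem h₁ h₂
    | smul r _ _ h => rw [smul_mul_assoc]; exact Submodule.smul_mem _ r h
  have mul_X (m : MvPolynomial σ R) (hm : m ∈ B ⊔ I.restrictScalars R) (i : σ) :
      m * X i ∈ B ⊔ I.restrictScalars R := by
    obtain ⟨b, hb, j, hj, rfl⟩ := Submodule.mem_sup.1 hm
    have hsplit : (b + j) * X i = b * X (e (τ i)) + (b * (X i - X (e (τ i))) + j * X i) := by
      ring
    rw [hsplit]
    refine add_mem (span_mul_X b hb _) (Submodule.mem_sup_right ?_)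
    exact add_mem (I.mul_mem_left b (hτ i)) (I.mul_mem_right _ hj)
  induction f using MvPolynomial.induction_on with
  | C a =>
    rw [C_eq_smul_one]
    exact Submodule.smul_mem _ a
      (Submodule.mem_sup_left (Submodule.subset_span ⟨∅, Finset.prod_empty⟩))
  | add p q hp hq => exact add_mem hp hq
  | mul_X p i hp => exact mul_X p hp i

end Reduction

end MvPolynomial

section Annihilator

variable {n : ℕ}

theorem mem_annIdeal {F f : MvPolynomial (Fin n) ℝ} : f ∈ annIdeal F ↔ dop n f F = 0 :=
  Iff.rfl

theorem dop_X_apply (i : Fin n) (p : MvPolynomial (Fin n) ℝ) : dop n (X i) p = pderiv i p := by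
  simp [dop, aeval_X]

theorem dop_mul_apply (f g p : MvPolynomial (Fin n) ℝ) :
    dop n (f * g) p = dop n f (dop n g p) := by
  rw [map_mul, Module.End.mul_apply]

theorem annIdeal_le_of_pairing {ι : Type*} [Fintype ι] [DecidableEq ι]
    {F : MvPolynomial (Fin n) ℝ} {I : Ideal (MvPolynomial (Fin n) ℝ)} (hI : I ≤ annIdeal F)
    (b c : ι → MvPolynomial (Fin n) ℝ)
    (hspan : ∀ f, f ∈ Submodule.span ℝ (Set.range b) ⊔ I.restrictScalars ℝ)
    (hpair : ∀ i j, constantCoeff (dop n (c i * b j) F) = if i = j then 1 else 0) :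
    annIdeal F ≤ I := by
  intro f hf
  obtain ⟨a, ha, j, hj, rfl⟩ := Submodule.mem_sup.1 (hspan f)
  obtain ⟨t, rfl⟩ := (Submodule.mem_span_range_iff_exists_fun ℝ).1 ha
  have hann : dop n (∑ k, t k • b k) F = 0 := by
    simpa only [add_sub_cancel_right, mem_annIdeal] using (annIdeal F).sub_mem hf (hI hj)
  have ht (i : ι) : t i = 0 :=
    calc t i = constantCoeff (dop n (c i * ∑ k, t k • b k) F) := by
          simp only [Finset.mul_sum, mul_smul_comm, map_sum, map_smul, LinearMap.sum_apply,
            LinearMap.smul_apply, constantCoeff_smul, smul_eq_mul, hpair, mul_ite, mul_one,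
            mul_zero, Finset.sum_ite_eq, Finset.mem_univ, if_true]
      _ = 0 := by rw [dop_mul_apply, hann, map_zero, map_zero]
  simpa [ht] using hj

end Annihilator

section FibreProduct

variable {n : ℕ} {ι : Type*} [DecidableEq ι] (τ : Fin n → ι)

theorem X_sub_X_mem_annIdeal [Fintype ι] {i j : Fin n} (h : τ i = τ j) :
    X i - X j ∈ annIdeal (∏ l, fiberSum τ l) := by
  rw [mem_annIdeal, map_sub, LinearMap.sub_apply, dop_X_apply, dop_X_apply,
    pderiv_prod_fiberSum, pderiv_prod_fiberSum, h, sub_self]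

theorem X_mul_X_mem_annIdeal [Fintype ι] {i j : Fin n} (h : τ i = τ j) :
    X i * X j ∈ annIdeal (∏ l, fiberSum τ l) := by
  rw [mem_annIdeal, dop_mul_apply, dop_X_apply, dop_X_apply, pderiv_prod_fiberSum,
    if_pos (Finset.mem_univ _), pderiv_prod_fiberSum, h, if_neg (Finset.notMem_erase _ _)]

variable {e : ι → Fin n}

theorem dop_prod_X_prod_fiberSum (he : ∀ k, τ (e k) = k) (S T : Finset ι) :
    dop n (∏ k ∈ S, X (e k)) (∏ l ∈ T, fiberSum τ l) =
      if S ⊆ T then ∏ l ∈ T \ S, fiberSum τ l else 0 := by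
  induction S using Finset.induction_on with
  | empty => simp
  | insert a S ha ih =>
    rw [Finset.prod_insert ha, dop_mul_apply, ih, dop_X_apply]
    by_cases hS : S ⊆ T
    · rw [if_pos hS, pderiv_prod_fiberSum, he, Finset.sdiff_insert]
      simp [Finset.insert_subset_iff, ha, hS]
    · simp [Finset.insert_subset_iff, hS]

theorem constantCoeff_dop_prod_X_compl_mul [Fintype ι] (he : ∀ k, τ (e k) = k)
    (S T : Finset ι) :
    constantCoeff
        (dop n ((∏ k ∈ Sᶜ, X (e k)) * ∏ k ∈ T, X (e k)) (∏ l, fiberSum τ l)) =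
      if S = T then 1 else 0 := by
  rw [dop_mul_apply, dop_prod_X_prod_fiberSum τ he, if_pos (Finset.subset_univ T),
    ← Finset.compl_eq_univ_sdiff, dop_prod_X_prod_fiberSum τ he]
  by_cases hTS : T ⊆ S
  · rw [if_pos (Finset.compl_subset_compl.2 hTS), constantCoeff_prod_fiberSum, compl_sdiff_compl]
    exact if_congr
      (Finset.sdiff_eq_empty_iff_subset.trans ⟨fun h => h.antisymm hTS, fun h => h.le⟩) rfl rfl
  · rw [if_neg (mt Finset.compl_subset_compl.1 hTS), map_zero,
      if_neg (by rintro rfl; exact hTS le_rfl)]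

end FibreProduct

-- Opposite vertices (1, 6), (2, 4), (3, 5) of the octahedron share an axis.
def octAxis : Fin 6 → Fin 3 := ![0, 1, 2, 1, 2, 0]

theorem Foct_eq_prod_fiberSum : Foct = ∏ k, fiberSum octAxis k := by
  simp only [Foct, fiberSum, Fin.prod_univ_three, Finset.sum_filter, Fin.sum_univ_six]
  simp only [octAxis, Matrix.cons_val_zero, Matrix.cons_val_one, Matrix.cons_val, Fin.isValue,
    Fin.reduceEq, ↓reduceIte, add_zero, zero_add]
  ring

def octIdeal : Ideal (MvPolynomial (Fin 6) ℝ) :=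
  Ideal.span {X 0 - X 5, X 1 - X 3, X 2 - X 4, X 0 ^ 2, X 1 ^ 2, X 2 ^ 2}

theorem octIdeal_le_annIdeal : octIdeal ≤ annIdeal Foct := by
  rw [octIdeal, Ideal.span_le, Foct_eq_prod_fiberSum]
  rintro g (rfl | rfl | rfl | rfl | rfl | rfl)
  · exact X_sub_X_mem_annIdeal octAxis (i := 0) (j := 5) rfl
  · exact X_sub_X_mem_annIdeal octAxis (i := 1) (j := 3) rfl
  · exact X_sub_X_mem_annIdeal octAxis (i := 2) (j := 4) rfl
  all_goals rw [SetLike.mem_coe, pow_two]; exact X_mul_X_mem_annIdeal octAxis rfl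

theorem X_sub_X_octAxis_mem_octIdeal (i : Fin 6) :
    X i - X (Fin.castAdd 3 (octAxis i)) ∈ octIdeal := by
  fin_cases i <;> simp [octAxis, octIdeal, sub_mem_comm_iff] <;> exact Ideal.subset_span (by simp)

theorem X_castAdd_sq_mem_octIdeal (k : Fin 3) : X (Fin.castAdd 3 k) ^ 2 ∈ octIdeal := by
  fin_cases k <;> exact Ideal.subset_span (by simp)

/-- The annihilator of the facet polynomial of the regular octahedron is the ideal generated
by `∂₁ - ∂₆, ∂₂ - ∂₄, ∂₃ - ∂₅, ∂₁², ∂₂², ∂₃²` (in `0`-based indexing). -/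
theorem octahedron_annihilator :
    annIdeal Foct =
      Ideal.span {X 0 - X 5, X 1 - X 3, X 2 - X 4,
        (X 0 : MvPolynomial (Fin 6) ℝ) ^ 2, (X 1 : MvPolynomial (Fin 6) ℝ) ^ 2,
        (X 2 : MvPolynomial (Fin 6) ℝ) ^ 2} := by
  change annIdeal Foct = octIdeal
  refine le_antisymm ?_ octIdeal_le_annIdeal
  refine annIdeal_le_of_pairing octIdeal_le_annIdeal (fun S => ∏ k ∈ S, X (Fin.castAdd 3 k))
    (fun S => ∏ k ∈ Sᶜ, X (Fin.castAdd 3 k))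
    (mem_span_prod_X_sup X_sub_X_octAxis_mem_octIdeal X_castAdd_sq_mem_octIdeal) ?_
  rw [Foct_eq_prod_fiberSum]
  exact constantCoeff_dop_prod_X_compl_mul octAxis (by decide)

end
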